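/- arXiv:1705.08768 — 4 statements merged into one kernel-verified Lean document; each statement's English description precedes it below -/
import Mathlib

section
/- The function x ↦ x·Δ'(x)/Δ(x), where Δ(x) = ∑_{d ∈ D} x^d/d! for a finite set D of natural numbers with at least two elements, is strictly increasing on (0, ∞). -/
open scoped BigOperators

/-- `Δ(x) = ∑_{d ∈ D} x^d / d!` -/
noncomputable def Delta (D : Finset ℕ) (x : ℝ) : ℝ :=
  ∑ d ∈ D, x ^ d / (Nat.factorial d)

/-!
`x Δ'(x) / Δ(x)` is the mean of the random variable `X` on `D` with `P(X = d) ∝ x^d / d!`, and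
differentiating it gives `Var(X) / x`, which is positive because `X` takes at least two values.
-/

open Finset Set

theorem Finset.sum_sum_mul_mul_sub_sq {ι R : Type*} [CommRing R] (s : Finset ι) (w v : ι → R) :
    ∑ i ∈ s, ∑ j ∈ s, w i * w j * (v i - v j) ^ 2 =
      2 * ((∑ i ∈ s, w i) * (∑ i ∈ s, v i ^ 2 * w i) - (∑ i ∈ s, v i * w i) ^ 2) := by
  calc ∑ i ∈ s, ∑ j ∈ s, w i * w j * (v i - v j) ^ 2
      = ∑ i ∈ s, ∑ j ∈ s, (w i * (v j ^ 2 * w j) + v i ^ 2 * w i * w j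
          - 2 * (v i * w i * (v j * w j))) :=
        sum_congr rfl fun i _ => sum_congr rfl fun j _ => by ring
    _ = _ := by
        simp only [sum_add_distrib, sum_sub_distrib, ← mul_sum, ← sum_mul]
        ring

theorem Finset.sq_sum_mul_lt_sum_mul_sum_sq_mul {ι R : Type*} [CommRing R] [LinearOrder R]
    [IsStrictOrderedRing R] {s : Finset ι} {w v : ι → R} (hw : ∀ i ∈ s, 0 < w i)
    (hv : ∃ i ∈ s, ∃ j ∈ s, v i ≠ v j) :
    (∑ i ∈ s, v i * w i) ^ 2 < (∑ i ∈ s, w i) * (∑ i ∈ s, v i ^ 2 * w i) := by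
  obtain ⟨i, hi, j, hj, hij⟩ := hv
  have hpos : 0 < ∑ i ∈ s, ∑ j ∈ s, w i * w j * (v i - v j) ^ 2 := by
    refine sum_pos' (fun i hi => sum_nonneg fun j hj => ?_)
      ⟨i, hi, sum_pos' (fun j hj => ?_) ⟨j, hj, ?_⟩⟩
    · have := hw i hi; have := hw j hj; positivity
    · have := hw i hi; have := hw j hj; positivity
    · have := hw i hi; have := hw j hj; have := sub_ne_zero.mpr hij; positivity
  rw [sum_sum_mul_mul_sub_sq] at hpos
  linarith

/-- Unnormalised `k`-th moment of `X` when `P(X = d) ∝ c d * x ^ d` on `D`. -/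
noncomputable def moment (D : Finset ℕ) (c : ℕ → ℝ) (k : ℕ) (x : ℝ) : ℝ :=
  ∑ d ∈ D, (d : ℝ) ^ k * (c d * x ^ d)

variable {D : Finset ℕ} {c : ℕ → ℝ} {x : ℝ}

theorem hasDerivAt_moment (k : ℕ) (hx : x ≠ 0) :
    HasDerivAt (moment D c k) (moment D c (k + 1) x / x) x := by
  refine (HasDerivAt.fun_sum fun d _ =>
    ((hasDerivAt_pow d x).const_mul (c d)).const_mul ((d : ℝ) ^ k)).congr_deriv ?_
  rw [moment, sum_div]
  refine sum_congr rfl fun d _ => ?_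
  rcases d with _ | d
  · simp
  · field_simp
    push_cast
    ring

theorem moment_zero_pos (hD : D.Nonempty) (hc : ∀ d ∈ D, 0 < c d) (hx : 0 < x) :
    0 < moment D c 0 x :=
  sum_pos (fun d hd => by have := hc d hd; positivity) hD

theorem sq_moment_one_lt (hD : 2 ≤ D.card) (hc : ∀ d ∈ D, 0 < c d) (hx : 0 < x) :
    moment D c 1 x ^ 2 < moment D c 0 x * moment D c 2 x := by
  obtain ⟨d, hd, e, he, hde⟩ := one_lt_card.mp hD
  simpa only [moment, pow_zero, one_mul, pow_one] using
    sq_sum_mul_lt_sum_mul_sum_sq_mul (fun d hd => by have := hc d hd; positivity)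
      ⟨d, hd, e, he, (Nat.cast_injective.ne hde : (d : ℝ) ≠ e)⟩

theorem strictMonoOn_moment_one_div_moment_zero (hD : 2 ≤ D.card) (hc : ∀ d ∈ D, 0 < c d) :
    StrictMonoOn (fun x => moment D c 1 x / moment D c 0 x) (Ioi 0) := by
  have hD' : D.Nonempty := card_pos.mp (by omega)
  have hderiv : ∀ x ∈ Ioi (0 : ℝ), HasDerivAt (fun x => moment D c 1 x / moment D c 0 x)
      ((moment D c 0 x * moment D c 2 x - moment D c 1 x ^ 2) / (x * moment D c 0 x ^ 2)) x := by
    intro x hx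
    refine ((hasDerivAt_moment 1 hx.ne').div (hasDerivAt_moment 0 hx.ne')
      (moment_zero_pos hD' hc hx).ne').congr_deriv ?_
    field_simp
  refine strictMonoOn_of_deriv_pos (convex_Ioi 0)
    (fun x hx => (hderiv x hx).continuousAt.continuousWithinAt) fun x hx => ?_
  rw [interior_Ioi] at hx
  rw [(hderiv x hx).deriv]
  exact div_pos (sub_pos.mpr (sq_moment_one_lt hD hc hx))
    (mul_pos hx (pow_pos (moment_zero_pos hD' hc hx) 2))

theorem Delta_eq_moment_zero (D : Finset ℕ) :
    Delta D = moment D (fun d => (d.factorial : ℝ)⁻¹) 0 := by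
  ext x
  simp only [Delta, moment, pow_zero, one_mul, div_eq_inv_mul]

/-- for a finite set `D` of naturals with at least two elements, the map
`x ↦ x·Δ'(x)/Δ(x)` is strictly increasing on `(0, ∞)`. -/
theorem stmt_0 (D : Finset ℕ) (hD : 2 ≤ D.card) :
    StrictMonoOn (fun x : ℝ => x * deriv (Delta D) x / Delta D x) (Set.Ioi 0) := by
  refine (strictMonoOn_moment_one_div_moment_zero hD (c := fun d => (d.factorial : ℝ)⁻¹)
    fun d _ => by positivity).congr fun x hx => ?_
  rw [Delta_eq_moment_zero, (hasDerivAt_moment 0 (ne_of_gt hx)).deriv,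
    mul_div_cancel₀ _ (ne_of_gt hx)]
end

section
/- For a finite set D of naturals with minimum d₋ and maximum d₊ and |D| ≥ 2, the map x ↦ x·Δ'(x)/Δ(x) is a bijection from [0, ∞) onto [d₋, d₊), where Δ(x) = ∑_{d ∈ D} x^d/d!. In particular, for every real λ with d₋ < λ < d₊ there is a unique χ > 0 with χ·Δ'(χ)/Δ(χ) = λ. -/
open scoped BigOperators

/-! With `m = min D` and weights `w_d(x) = x^(d-m)/d!`, the value `xΔ'(x)/Δ(x)` at `x > 0` is the
mean of `d` under the weights `w_d(x)`, and this mean is continuous on `[0, ∞)` with value `m` at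
`0`. For `x < y` the ratio `w_d(y)/w_d(x)` increases with `d`, which pushes the mean strictly up;
it stays below `M = max D`, and tends to `M` since the weight of `M` dominates for large `x`. The
intermediate value theorem gives surjectivity onto `[m, M)`. -/

open Filter Set Topology

theorem pow_mul_pow_le_pow_mul_pow {R : Type*} [CommSemiring R] [PartialOrder R] [IsOrderedRing R]
    {x y : R} (hx : 0 ≤ x) (hxy : x ≤ y) {a b : ℕ} (hab : a ≤ b) :
    x ^ b * y ^ a ≤ y ^ b * x ^ a := by
  obtain ⟨k, rfl⟩ := Nat.exists_eq_add_of_le hab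
  calc x ^ (a + k) * y ^ a = (x ^ a * y ^ a) * x ^ k := by ring
    _ ≤ (x ^ a * y ^ a) * y ^ k :=
      mul_le_mul_of_nonneg_left (pow_le_pow_left₀ hx hxy k) (by positivity [hx.trans hxy])
    _ = y ^ (a + k) * x ^ a := by ring

theorem tendsto_sum_mul_pow_div_pow_atTop {D : Finset ℕ} {M : ℕ}
    (hM : IsGreatest (D : Set ℕ) M) (a : ℕ → ℝ) :
    Tendsto (fun x : ℝ => (∑ d ∈ D, a d * x ^ d) / x ^ M) atTop (𝓝 (a M)) := by
  have hterm : ∀ d ∈ D, Tendsto (fun x : ℝ => a d * (x ^ d / x ^ M)) atTop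
      (𝓝 (if d = M then a M else 0)) := by
    intro d hd
    split_ifs with hdM
    · subst hdM
      refine tendsto_const_nhds.congr' ?_
      filter_upwards [eventually_ne_atTop 0] with x hx
      rw [div_self (pow_ne_zero _ hx), mul_one]
    · simpa using ((tendsto_pow_div_pow_atTop_zero ((hM.2 hd).lt_of_ne hdM)).const_mul (a d))
  have hsum := tendsto_finsetSum D hterm
  rw [Finset.sum_ite_eq', if_pos (show M ∈ D from hM.1)] at hsum
  simpa only [Finset.sum_div, mul_div_assoc] using hsum

theorem Set.BijOn.existsUnique_pos {f : ℝ → ℝ} {a b lam : ℝ} (hf : BijOn f (Ici 0) (Ico a b))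
    (hf0 : f 0 = a) (ha : a < lam) (hb : lam < b) : ∃! x, 0 < x ∧ f x = lam := by
  obtain ⟨x, hx, rfl⟩ := hf.surjOn ⟨ha.le, hb⟩
  have hx0 : x ≠ 0 := by rintro rfl; exact ha.ne' hf0
  refine ⟨x, ⟨lt_of_le_of_ne hx (Ne.symm hx0), rfl⟩, fun y ⟨hy, hyx⟩ => ?_⟩
  exact hf.injOn (le_of_lt hy) hx hyx

noncomputable def indexMean (D : Finset ℕ) (w : ℕ → ℝ) : ℝ :=
  (∑ d ∈ D, (d : ℝ) * w d) / ∑ d ∈ D, w d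

section indexMean

variable {D : Finset ℕ} {w : ℕ → ℝ}

theorem indexMean_congr {w' : ℕ → ℝ} (h : ∀ d ∈ D, w d = w' d) :
    indexMean D w = indexMean D w' := by
  rw [indexMean, indexMean, Finset.sum_congr rfl h, Finset.sum_congr rfl fun d hd => by rw [h d hd]]

theorem indexMean_mul_left {s : ℝ} (hs : s ≠ 0) :
    indexMean D (fun d => s * w d) = indexMean D w := by
  simp only [indexMean, mul_left_comm _ s, ← Finset.mul_sum]
  exact mul_div_mul_left _ _ hs

theorem le_indexMean {a : ℝ} (hw : ∀ d ∈ D, 0 ≤ w d) (hpos : 0 < ∑ d ∈ D, w d)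
    (ha : ∀ d ∈ D, a ≤ d) : a ≤ indexMean D w := by
  rw [indexMean, le_div_iff₀ hpos, Finset.mul_sum]
  exact Finset.sum_le_sum fun d hd => mul_le_mul_of_nonneg_right (ha d hd) (hw d hd)

theorem indexMean_lt {b : ℝ} (hw : ∀ d ∈ D, 0 ≤ w d) (hb : ∀ d ∈ D, d ≤ b)
    (hlt : ∃ d ∈ D, d < b ∧ 0 < w d) : indexMean D w < b := by
  obtain ⟨e, he, heb, hwe⟩ := hlt
  have hpos : 0 < ∑ d ∈ D, w d := Finset.sum_pos' hw ⟨e, he, hwe⟩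
  rw [indexMean, div_lt_iff₀ hpos, Finset.mul_sum]
  exact Finset.sum_lt_sum (fun d hd => mul_le_mul_of_nonneg_right (hb d hd) (hw d hd))
    ⟨e, he, mul_lt_mul_of_pos_right heb hwe⟩

theorem lt_indexMean_iff {a : ℝ} (hpos : 0 < ∑ d ∈ D, w d) :
    a < indexMean D w ↔ 0 < ∑ d ∈ D, ((d : ℝ) - a) * w d := by
  rw [indexMean, lt_div_iff₀ hpos, ← sub_pos, Finset.mul_sum, ← Finset.sum_sub_distrib]
  simp only [sub_mul]

theorem two_mul_sum_mul_sum_sub (u v : ℕ → ℝ) :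
    2 * ((∑ d ∈ D, (d : ℝ) * v d) * (∑ e ∈ D, u e) - (∑ d ∈ D, (d : ℝ) * u d) * (∑ e ∈ D, v e))
      = ∑ d ∈ D, ∑ e ∈ D, ((d : ℝ) - e) * (v d * u e - u d * v e) := by
  have hT : (∑ d ∈ D, (d : ℝ) * v d) * (∑ e ∈ D, u e)
      - (∑ d ∈ D, (d : ℝ) * u d) * (∑ e ∈ D, v e)
      = ∑ d ∈ D, ∑ e ∈ D, (d : ℝ) * (v d * u e - u d * v e) := by
    simp only [Finset.sum_mul_sum, ← Finset.sum_sub_distrib]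
    exact Finset.sum_congr rfl fun d _ => Finset.sum_congr rfl fun e _ => by ring
  have hswap : ∑ d ∈ D, ∑ e ∈ D, (d : ℝ) * (v d * u e - u d * v e)
      = ∑ d ∈ D, ∑ e ∈ D, -(e : ℝ) * (v d * u e - u d * v e) := by
    rw [Finset.sum_comm]
    exact Finset.sum_congr rfl fun d _ => Finset.sum_congr rfl fun e _ => by ring
  rw [hT, two_mul]
  nth_rw 2 [hswap]
  simp only [← Finset.sum_add_distrib]
  exact Finset.sum_congr rfl fun d _ => Finset.sum_congr rfl fun e _ => by ring

theorem indexMean_lt_indexMean {u v : ℕ → ℝ} (hu : ∀ d ∈ D, 0 ≤ u d) (hv : ∀ d ∈ D, 0 ≤ v d)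
    (huv : ∀ d ∈ D, ∀ e ∈ D, e ≤ d → u d * v e ≤ v d * u e)
    (hstrict : ∃ d ∈ D, ∃ e ∈ D, e < d ∧ u d * v e < v d * u e) :
    indexMean D u < indexMean D v := by
  obtain ⟨d₀, hd₀, e₀, he₀, hlt₀, hstrict₀⟩ := hstrict
  have hvu : 0 < v d₀ * u e₀ := (mul_nonneg (hu d₀ hd₀) (hv e₀ he₀)).trans_lt hstrict₀
  have hU : 0 < ∑ d ∈ D, u d := Finset.sum_pos' hu ⟨e₀, he₀, pos_of_mul_pos_right hvu (hv d₀ hd₀)⟩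
  have hV : 0 < ∑ d ∈ D, v d := Finset.sum_pos' hv ⟨d₀, hd₀, pos_of_mul_pos_left hvu (hu e₀ he₀)⟩
  have hterm : ∀ d ∈ D, ∀ e ∈ D, 0 ≤ ((d : ℝ) - e) * (v d * u e - u d * v e) := by
    intro d hd e he
    rcases le_total e d with hed | hde
    · exact mul_nonneg (sub_nonneg.mpr (Nat.cast_le.mpr hed))
        (sub_nonneg.mpr (by linarith [huv d hd e he hed]))
    · exact mul_nonneg_of_nonpos_of_nonpos (sub_nonpos.mpr (Nat.cast_le.mpr hde))
        (sub_nonpos.mpr (by linarith [huv e he d hd hde]))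
  have hsum : 0 < ∑ d ∈ D, ∑ e ∈ D, ((d : ℝ) - e) * (v d * u e - u d * v e) := by
    refine Finset.sum_pos' (fun d hd => Finset.sum_nonneg (hterm d hd)) ⟨d₀, hd₀, ?_⟩
    refine Finset.sum_pos' (hterm d₀ hd₀) ⟨e₀, he₀, mul_pos ?_ (sub_pos.mpr hstrict₀)⟩
    exact sub_pos.mpr (Nat.cast_lt.mpr hlt₀)
  rw [indexMean, indexMean, div_lt_div_iff₀ hU hV]
  linarith [two_mul_sum_mul_sum_sub (D := D) u v]

end indexMean

/-- Dividing the weights `c d * x ^ d` by `x ^ m` does not change the mean for `x ≠ 0`, and for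
`m = min D` makes it continuous at `x = 0`. -/
noncomputable def powMean (D : Finset ℕ) (c : ℕ → ℝ) (m : ℕ) (x : ℝ) : ℝ :=
  indexMean D fun d => c d * x ^ (d - m)

section powMean

variable {D : Finset ℕ} {c : ℕ → ℝ} {m M : ℕ}

theorem sum_mul_pow_sub_pos (hc : ∀ d ∈ D, 0 < c d) (hm : m ∈ D) {x : ℝ} (hx : 0 ≤ x) :
    0 < ∑ d ∈ D, c d * x ^ (d - m) :=
  Finset.sum_pos' (fun d hd => mul_nonneg (hc d hd).le (pow_nonneg hx _))
    ⟨m, hm, by simpa using hc m hm⟩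

theorem powMean_eq_indexMean (hm : ∀ d ∈ D, m ≤ d) {x : ℝ} (hx : x ≠ 0) :
    powMean D c m x = indexMean D fun d => c d * x ^ d := by
  rw [powMean, ← indexMean_mul_left (pow_ne_zero m hx)]
  exact indexMean_congr fun d hd => by rw [mul_left_comm, ← pow_add, Nat.add_sub_cancel' (hm d hd)]

theorem powMean_zero (hc : ∀ d ∈ D, 0 < c d) (hm : IsLeast (D : Set ℕ) m) :
    powMean D c m 0 = m := by
  have hsingle : ∀ a : ℕ → ℝ, ∑ d ∈ D, a d * (c d * (0 : ℝ) ^ (d - m)) = a m * c m := by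
    intro a
    rw [Finset.sum_eq_single_of_mem m hm.1]
    · simp
    · intro d hd hdm
      simp [zero_pow (Nat.sub_ne_zero_of_lt ((hm.2 hd).lt_of_ne' hdm))]
  have h1 := hsingle (fun _ => 1)
  simp only [one_mul] at h1
  rw [powMean, indexMean, hsingle, h1, mul_div_cancel_right₀ _ (hc m hm.1).ne']

theorem continuousOn_powMean (hc : ∀ d ∈ D, 0 < c d) (hm : m ∈ D) :
    ContinuousOn (powMean D c m) (Ici 0) := by
  refine ContinuousOn.div (by fun_prop) (by fun_prop) fun x hx => ?_
  exact (sum_mul_pow_sub_pos hc hm hx).ne'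

theorem strictMonoOn_powMean (hc : ∀ d ∈ D, 0 < c d) (hm : IsLeast (D : Set ℕ) m)
    (hM : M ∈ D) (hmM : m < M) : StrictMonoOn (powMean D c m) (Ici 0) := by
  intro x hx y _ hxy
  refine indexMean_lt_indexMean (fun d hd => mul_nonneg (hc d hd).le (pow_nonneg hx _))
    (fun d hd => mul_nonneg (hc d hd).le (pow_nonneg (hx.trans hxy.le) _))
    (fun d hd e he hed => ?_) ⟨M, hM, m, hm.1, hmM, ?_⟩
  · have := pow_mul_pow_le_pow_mul_pow (Set.mem_Ici.mp hx) hxy.le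
      (Nat.sub_le_sub_right hed m)
    calc c d * x ^ (d - m) * (c e * y ^ (e - m))
        = c d * c e * (x ^ (d - m) * y ^ (e - m)) := by ring
      _ ≤ c d * c e * (y ^ (d - m) * x ^ (e - m)) :=
        mul_le_mul_of_nonneg_left this (mul_pos (hc d hd) (hc e he)).le
      _ = c d * y ^ (d - m) * (c e * x ^ (e - m)) := by ring
  · have hpow : x ^ (M - m) < y ^ (M - m) :=
      pow_lt_pow_left₀ hxy (Set.mem_Ici.mp hx) (Nat.sub_ne_zero_of_lt hmM)
    simp only [Nat.sub_self, pow_zero, mul_one]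
    exact mul_lt_mul_of_pos_right (mul_lt_mul_of_pos_left hpow (hc M hM)) (hc m hm.1)

theorem mapsTo_powMean (hc : ∀ d ∈ D, 0 < c d) (hm : IsLeast (D : Set ℕ) m)
    (hM : IsGreatest (D : Set ℕ) M) (hmM : m < M) :
    MapsTo (powMean D c m) (Ici 0) (Ico (m : ℝ) M) := by
  intro x hx
  have hw : ∀ d ∈ D, 0 ≤ c d * x ^ (d - m) :=
    fun d hd => mul_nonneg (hc d hd).le (pow_nonneg hx _)
  refine ⟨le_indexMean hw (sum_mul_pow_sub_pos hc hm.1 hx)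
      fun d hd => Nat.cast_le.mpr (hm.2 hd),
    indexMean_lt hw (fun d hd => Nat.cast_le.mpr (hM.2 hd))
      ⟨m, hm.1, Nat.cast_lt.mpr hmM, by simpa using hc m hm.1⟩⟩

theorem exists_lt_powMean (hc : ∀ d ∈ D, 0 < c d) (hm : IsLeast (D : Set ℕ) m)
    (hM : IsGreatest (D : Set ℕ) M) {lam : ℝ} (hlam : lam < M) :
    ∃ x, 0 ≤ x ∧ lam < powMean D c m x := by
  have hlim := tendsto_sum_mul_pow_div_pow_atTop hM fun d => ((d : ℝ) - lam) * c d
  have hpos : 0 < ((M : ℝ) - lam) * c M := mul_pos (sub_pos.mpr hlam) (hc M hM.1)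
  obtain ⟨x, hxpos, hx⟩ :=
    ((hlim.eventually (lt_mem_nhds hpos)).and (eventually_gt_atTop 0)).exists
  refine ⟨x, hx.le, ?_⟩
  rw [powMean_eq_indexMean hm.2 hx.ne', lt_indexMean_iff]
  · simpa only [mul_assoc] using (div_pos_iff_of_pos_right (pow_pos hx M)).mp hxpos
  · exact Finset.sum_pos' (fun d hd => mul_nonneg (hc d hd).le (pow_nonneg hx.le d))
      ⟨M, hM.1, mul_pos (hc M hM.1) (pow_pos hx M)⟩

theorem bijOn_powMean (hc : ∀ d ∈ D, 0 < c d) (hm : IsLeast (D : Set ℕ) m)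
    (hM : IsGreatest (D : Set ℕ) M) (hmM : m < M) :
    BijOn (powMean D c m) (Ici 0) (Ico (m : ℝ) M) := by
  refine ⟨mapsTo_powMean hc hm hM hmM, (strictMonoOn_powMean hc hm hM.1 hmM).injOn,
    fun lam hlam => ?_⟩
  obtain ⟨b, hb, hlt⟩ := exists_lt_powMean hc hm hM hlam.2
  have hmem : lam ∈ Icc (powMean D c m 0) (powMean D c m b) :=
    ⟨(powMean_zero hc hm).symm ▸ hlam.1, hlt.le⟩
  obtain ⟨x, hx, rfl⟩ := intermediate_value_Icc hb
    ((continuousOn_powMean hc hm.1).mono Icc_subset_Ici_self) hmem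
  exact ⟨x, hx.1, rfl⟩

end powMean

theorem mul_deriv_sum_mul_pow (D : Finset ℕ) (c : ℕ → ℝ) (x : ℝ) :
    x * deriv (fun x => ∑ d ∈ D, c d * x ^ d) x = ∑ d ∈ D, (d : ℝ) * (c d * x ^ d) := by
  have hderiv : HasDerivAt (fun x => ∑ d ∈ D, c d * x ^ d)
      (∑ d ∈ D, c d * (d * x ^ (d - 1))) x :=
    HasDerivAt.fun_sum fun d _ => (hasDerivAt_pow d x).const_mul (c d)
  rw [hderiv.deriv, Finset.mul_sum]
  refine Finset.sum_congr rfl fun d _ => ?_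
  rcases d with _ | d
  · simp
  · rw [Nat.add_sub_cancel, pow_succ]
    ring

theorem Delta_eq_sum (D : Finset ℕ) : Delta D = fun x => ∑ d ∈ D, (d.factorial : ℝ)⁻¹ * x ^ d :=
  funext fun _ => Finset.sum_congr rfl fun _ _ => div_eq_inv_mul _ _

theorem mul_deriv_Delta_div_Delta {D : Finset ℕ} {m : ℕ} (hm : ∀ d ∈ D, m ≤ d) {x : ℝ}
    (hx : x ≠ 0) :
    x * deriv (Delta D) x / Delta D x = powMean D (fun d => (d.factorial : ℝ)⁻¹) m x := by
  rw [powMean_eq_indexMean hm hx, Delta_eq_sum, mul_deriv_sum_mul_pow, indexMean]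

/-- for a finite set `D` of naturals with `|D| ≥ 2`, minimum `d₋` and
maximum `d₊`, the map `x ↦ x·Δ'(x)/Δ(x)` (interpreted as `d₋` at `x = 0`) is a bijection
from `[0, ∞)` onto `[d₋, d₊)`; in particular for every `λ` with `d₋ < λ < d₊` there is a
unique `χ > 0` with `χ·Δ'(χ)/Δ(χ) = λ`. -/
theorem stmt_1 (D : Finset ℕ) (hD : 2 ≤ D.card) (hne : D.Nonempty) :
    Set.BijOn
      (fun x : ℝ => if x = 0 then (D.min' hne : ℝ)
        else x * deriv (Delta D) x / Delta D x)
      (Set.Ici 0) (Set.Ico (D.min' hne : ℝ) (D.max' hne : ℝ)) ∧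
    ∀ lam : ℝ, (D.min' hne : ℝ) < lam → lam < (D.max' hne : ℝ) →
      ∃! chi : ℝ, 0 < chi ∧ chi * deriv (Delta D) chi / Delta D chi = lam := by
  set f := fun x : ℝ => if x = 0 then (D.min' hne : ℝ) else x * deriv (Delta D) x / Delta D x
  have hc : ∀ d ∈ D, 0 < (d.factorial : ℝ)⁻¹ := fun d _ => by positivity
  have hmin := D.isLeast_min' hne
  have hEq : EqOn (powMean D (fun d => (d.factorial : ℝ)⁻¹) (D.min' hne)) f (Ici 0) := by
    intro x _
    by_cases hx : x = 0
    · rw [hx, powMean_zero hc hmin]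
      exact (if_pos rfl).symm
    · simp only [f, if_neg hx, mul_deriv_Delta_div_Delta hmin.2 hx]
  have hbij : BijOn f (Ici 0) (Ico (D.min' hne : ℝ) (D.max' hne)) :=
    (bijOn_powMean hc hmin (D.isGreatest_max' hne) (D.min'_lt_max'_of_card hD)).congr hEq
  refine ⟨hbij, fun lam hlo hhi => ?_⟩
  refine (existsUnique_congr fun x => ?_).mp (hbij.existsUnique_pos (if_pos rfl) hlo hhi)
  exact and_congr_right fun hx => by simp only [f, if_neg hx.ne']
end

section
/- Let F be a strictly balanced graph of density d = ℓ/k (with ℓ edges and k vertices). If G is a graph containing two distinct subgraphs F₁, F₂ both isomorphic to F with V(F₁) ∩ V(F₂) ≠ ∅, then the union F₁ ∪ F₂ has density strictly greater than d. -/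
open scoped BigOperators Classical

def IsCopyOf {k n : ℕ} (H : SimpleGraph (Fin k)) (S : Finset (Fin n))
    (E : Finset (Sym2 (Fin n))) : Prop :=
  ∃ φ : Fin k → Fin n, Function.Injective φ ∧
    Finset.image φ Finset.univ = S ∧ Sym2.map φ '' H.edgeSet = (E : Set (Sym2 (Fin n)))

/-- `F` is strictly balanced: every proper subgraph (on a nonempty vertex set) has density
strictly smaller than `d(F)`. -/
def StrictlyBalanced {k : ℕ} (F : SimpleGraph (Fin k)) : Prop :=
  ∀ (S : Finset (Fin k)) (E : Finset (Sym2 (Fin k))),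
    S.Nonempty →
    (∀ s ∈ E, s ∈ F.edgeSet ∧ ∀ v ∈ s, v ∈ S) →
    ¬(S = Finset.univ ∧ (E : Set (Sym2 (Fin k))) = F.edgeSet) →
    (E.card : ℚ) / S.card < (F.edgeSet.ncard : ℚ) / k

/-- if `F` is strictly balanced with `k` vertices and `ℓ` edges and a graph
contains two distinct `F`-copies `F₁`, `F₂` sharing at least one vertex, then the union
`F₁ ∪ F₂` has density strictly greater than `d(F) = ℓ/k`. -/
theorem stmt_10 (k l n : ℕ) (F : SimpleGraph (Fin k))
    (hl : F.edgeSet.ncard = l) (hbal : StrictlyBalanced F)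
    (S₁ S₂ : Finset (Fin n)) (E₁ E₂ : Finset (Sym2 (Fin n)))
    (h₁ : IsCopyOf F S₁ E₁) (h₂ : IsCopyOf F S₂ E₂)
    (hne : (S₁, E₁) ≠ (S₂, E₂)) (hmeet : (S₁ ∩ S₂).Nonempty) :
    ((l : ℚ) / k) < ((E₁ ∪ E₂).card : ℚ) / ((S₁ ∪ S₂).card) := by
  classical
  obtain ⟨φ₁, hφ₁i, hφ₁S, hφ₁E⟩ := h₁
  obtain ⟨φ₂, hφ₂i, hφ₂S, hφ₂E⟩ := h₂
  have hmapinj := Sym2.map.injective hφ₁i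
  have hS₁ : S₁.card = k := by
    rw [← hφ₁S, Finset.card_image_of_injective _ hφ₁i, Finset.card_univ, Fintype.card_fin]
  have hS₂ : S₂.card = k := by
    rw [← hφ₂S, Finset.card_image_of_injective _ hφ₂i, Finset.card_univ, Fintype.card_fin]
  have hEcard : ∀ (φ : Fin k → Fin n), Function.Injective φ →
      ∀ E : Finset (Sym2 (Fin n)), Sym2.map φ '' F.edgeSet = (E : Set (Sym2 (Fin n))) →
      E.card = l := by
    intro φ hφ E hE
    have : (E : Set (Sym2 (Fin n))).ncard = l := by
      rw [← hE, Set.ncard_image_of_injective _ (Sym2.map.injective hφ), hl]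
    simpa [Set.ncard_coe_finset] using this
  have hE₁ : E₁.card = l := hEcard φ₁ hφ₁i E₁ hφ₁E
  have hE₂ : E₂.card = l := hEcard φ₂ hφ₂i E₂ hφ₂E
  -- vertices of edges of a copy lie in the copy's vertex set
  have hvert : ∀ (φ : Fin k → Fin n) (S : Finset (Fin n)) (E : Finset (Sym2 (Fin n))),
      Finset.image φ Finset.univ = S →
      Sym2.map φ '' F.edgeSet = (E : Set (Sym2 (Fin n))) →
      ∀ e ∈ E, ∀ v ∈ e, v ∈ S := by
    intro φ S E hS hE e he v hv
    have : e ∈ Sym2.map φ '' F.edgeSet := by rw [hE]; exact he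
    obtain ⟨e', _, rfl⟩ := this
    obtain ⟨u, _, rfl⟩ := Sym2.mem_map.1 hv
    rw [← hS]; exact Finset.mem_image.2 ⟨u, Finset.mem_univ u, rfl⟩
  -- pull back the intersection via φ₁
  set S : Finset (Fin k) := Finset.univ.filter (fun v => φ₁ v ∈ S₁ ∩ S₂) with hSdef
  set E : Finset (Sym2 (Fin k)) :=
    F.edgeFinset.filter (fun e => Sym2.map φ₁ e ∈ E₁ ∩ E₂) with hEdef
  have himS : Finset.image φ₁ S = S₁ ∩ S₂ := by
    ext x
    simp only [hSdef, Finset.mem_image, Finset.mem_filter, Finset.mem_univ, true_and]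
    constructor
    · rintro ⟨v, hv, rfl⟩; exact hv
    · intro hx
      have : x ∈ Finset.image φ₁ Finset.univ := by
        rw [hφ₁S]; exact Finset.mem_of_mem_inter_left hx
      obtain ⟨v, -, rfl⟩ := Finset.mem_image.1 this
      exact ⟨v, hx, rfl⟩
  have himE : Finset.image (Sym2.map φ₁) E = E₁ ∩ E₂ := by
    ext x
    simp only [hEdef, Finset.mem_image, Finset.mem_filter]
    constructor
    · rintro ⟨e, ⟨-, he⟩, rfl⟩; exact he
    · intro hx
      have : x ∈ Sym2.map φ₁ '' F.edgeSet := by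
        rw [hφ₁E]; exact Finset.mem_of_mem_inter_left hx
      obtain ⟨e, he, rfl⟩ := this
      exact ⟨e, ⟨SimpleGraph.mem_edgeFinset.2 he, hx⟩, rfl⟩
  have hScard : S.card = (S₁ ∩ S₂).card := by
    rw [← himS, Finset.card_image_of_injective _ hφ₁i]
  have hEc : E.card = (E₁ ∩ E₂).card := by
    rw [← himE, Finset.card_image_of_injective _ hmapinj]
  have hSne : S.Nonempty := by
    obtain ⟨x, hx⟩ := hmeet
    have : x ∈ Finset.image φ₁ S := by rw [himS]; exact hx
    obtain ⟨v, hv, -⟩ := Finset.mem_image.1 this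
    exact ⟨v, hv⟩
  have hEsub : ∀ s ∈ E, s ∈ F.edgeSet ∧ ∀ v ∈ s, v ∈ S := by
    intro s hs
    rw [hEdef, Finset.mem_filter] at hs
    refine ⟨SimpleGraph.mem_edgeFinset.1 hs.1, fun v hv => ?_⟩
    rw [hSdef]
    simp only [Finset.mem_filter, Finset.mem_univ, true_and]
    have hmem : φ₁ v ∈ Sym2.map φ₁ s := Sym2.mem_map.2 ⟨v, hv, rfl⟩
    exact Finset.mem_inter.2
      ⟨hvert φ₁ S₁ E₁ hφ₁S hφ₁E _ (Finset.mem_of_mem_inter_left hs.2) _ hmem,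
       hvert φ₂ S₂ E₂ hφ₂S hφ₂E _ (Finset.mem_of_mem_inter_right hs.2) _ hmem⟩
  have hproper : ¬(S = Finset.univ ∧ (E : Set (Sym2 (Fin k))) = F.edgeSet) := by
    rintro ⟨hSu, hEu⟩
    apply hne
    have hS12 : S₁ = S₂ := by
      have hsub : S₁ ⊆ S₂ := by
        intro x hx
        have : x ∈ Finset.image φ₁ Finset.univ := by rw [hφ₁S]; exact hx
        obtain ⟨v, -, rfl⟩ := Finset.mem_image.1 this
        have : φ₁ v ∈ S₁ ∩ S₂ := by
          rw [← himS]; exact Finset.mem_image.2 ⟨v, by rw [hSu]; exact Finset.mem_univ v, rfl⟩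
        exact Finset.mem_of_mem_inter_right this
      exact Finset.eq_of_subset_of_card_le hsub (by rw [hS₁, hS₂])
    have hE12 : E₁ = E₂ := by
      have hEeq : E = F.edgeFinset := by
        apply Finset.coe_injective
        rw [hEu, SimpleGraph.coe_edgeFinset]
      have hsub : E₁ ⊆ E₂ := by
        intro x hx
        have : x ∈ Sym2.map φ₁ '' F.edgeSet := by rw [hφ₁E]; exact hx
        obtain ⟨e, he, rfl⟩ := this
        have : Sym2.map φ₁ e ∈ E₁ ∩ E₂ := by
          rw [← himE]
          exact Finset.mem_image.2 ⟨e, by rw [hEeq]; exact SimpleGraph.mem_edgeFinset.2 he, rfl⟩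
        exact Finset.mem_of_mem_inter_right this
      exact Finset.eq_of_subset_of_card_le hsub (by rw [hE₁, hE₂])
    rw [hS12, hE12]
  have hkey := hbal S E hSne hEsub hproper
  rw [hl, hScard, hEc] at hkey
  -- numeric bookkeeping
  have hk1 : 1 ≤ k := by
    obtain ⟨v, -⟩ := hSne
    exact v.pos
  have hsk : (S₁ ∩ S₂).card ≤ k := hS₁ ▸ Finset.card_le_card Finset.inter_subset_left
  have hs1 : 1 ≤ (S₁ ∩ S₂).card := Finset.card_pos.2 hmeet
  have hUS : (S₁ ∪ S₂).card + (S₁ ∩ S₂).card = 2 * k := by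
    rw [Finset.card_union_add_card_inter, hS₁, hS₂]; ring
  have hUE : (E₁ ∪ E₂).card + (E₁ ∩ E₂).card = 2 * l := by
    rw [Finset.card_union_add_card_inter, hE₁, hE₂]; ring
  have hkpos : (0:ℚ) < k := by exact_mod_cast hk1
  have hspos : (0:ℚ) < (S₁ ∩ S₂).card := by exact_mod_cast hs1
  have hwpos : (0:ℚ) < (S₁ ∪ S₂).card := by
    have : k ≤ (S₁ ∪ S₂).card := hS₁ ▸ Finset.card_le_card Finset.subset_union_left
    exact_mod_cast lt_of_lt_of_le hk1 this
  rw [div_lt_div_iff₀ hspos hkpos] at hkey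
  rw [div_lt_div_iff₀ hkpos hwpos]
  have hUSq : ((S₁ ∪ S₂).card : ℚ) + (S₁ ∩ S₂).card = 2 * k := by exact_mod_cast hUS
  have hUEq : ((E₁ ∪ E₂).card : ℚ) + (E₁ ∩ E₂).card = 2 * l := by exact_mod_cast hUE
  nlinarith [hkey, hUSq, hUEq]
end

section
/- For any graph family 𝓕 with exponential generating function F(z,w) = ∑ 𝓕_{n,m} w^m z^n/n! (𝓕_{n,m} = number of (n,m)-graphs in 𝓕), the number of (n,m)-graphs with one distinguished 𝓕-subgraph equals n!·[z^n w^m] F(z, w/(1+w)) e^z (1+w)^{C(n,2)}. -/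
open scoped BigOperators Classical
open PowerSeries

def IsGraph {n : ℕ} (G : Finset (Sym2 (Fin n))) (m : ℕ) : Prop :=
  G.card = m ∧ ∀ s ∈ G, ¬ s.IsDiag

/-- `𝓕_{k,ℓ}`: the number of graphs on `{1,…,k}` with `ℓ` edges belonging to the family. -/
noncomputable def famCount (𝓕 : (k : ℕ) → Set (SimpleGraph (Fin k))) (k l : ℕ) : ℕ :=
  Nat.card {G : SimpleGraph (Fin k) // G ∈ 𝓕 k ∧ G.edgeSet.ncard = l}

/-- The bivariate series `F(z, w/(1+w))`, given coefficientwise: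
`[z^k w^j] = ∑_{ℓ ≤ j} (𝓕_{k,ℓ}/k!) · [w^j] (w/(1+w))^ℓ`. -/
noncomputable def famEGFsub (𝓕 : (k : ℕ) → Set (SimpleGraph (Fin k))) :
    PowerSeries (PowerSeries ℚ) :=
  PowerSeries.mk fun k => PowerSeries.mk fun j =>
    ∑ l ∈ Finset.range (j + 1),
      ((famCount 𝓕 k l : ℚ) / Nat.factorial k) *
        PowerSeries.coeff (R := ℚ) j ((X * (1 + X)⁻¹ : PowerSeries ℚ) ^ l)

/-!
Count the triples `(G, S, E)` by choosing the distinguished copy first. Its vertex set `S` can be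
chosen in `C(n,k)` ways when `|S| = k`; relabelling along the increasing bijection `Fin k ≃ S` and
using that `𝓕` is closed under isomorphism, its edge set `E` with `|E| = ℓ` can be chosen in
`𝓕_{k,ℓ}` ways; and the remaining `m - ℓ` edges of `G` are chosen among the `C(n,2) - ℓ` free pairs.
On the series side, `k! [z^k] F(z, w/(1+w)) · (1+w)^{C(n,2)} = ∑_ℓ 𝓕_{k,ℓ} w^ℓ (1+w)^{C(n,2)-ℓ}`,
whose coefficient of `w^m` is `∑_ℓ 𝓕_{k,ℓ} C(C(n,2)-ℓ, m-ℓ)`, and the factor `e^z` contributes the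
`1/(n-k)!` that turns `n!/k!` into `C(n,k)`.
-/

open Finset

namespace PowerSeries

theorem coeff_one_add_X_pow {R : Type*} [Semiring R] (N j : ℕ) :
    coeff j ((1 + X : R⟦X⟧) ^ N) = N.choose j := by
  rw [show (1 + X : R⟦X⟧) = ((1 + Polynomial.X : Polynomial R) : R⟦X⟧) by simp,
    ← Polynomial.coe_pow, Polynomial.coeff_coe, Polynomial.coeff_one_add_X_pow]

theorem coeff_X_pow_mul_one_add_X_pow {R : Type*} [Semiring R] (l N m : ℕ) :
    coeff m (X ^ l * (1 + X : R⟦X⟧) ^ N) = if l ≤ m then (N.choose (m - l) : R) else 0 := by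
  rw [coeff_X_pow_mul', coeff_one_add_X_pow]

variable {K : Type*} [Field K]

theorem coeff_X_mul_inv_one_add_X_pow_of_lt {j l : ℕ} (h : j < l) :
    coeff j ((X * (1 + X)⁻¹ : K⟦X⟧) ^ l) = 0 := by
  rw [mul_pow, coeff_X_pow_mul', if_neg (by omega)]

theorem X_mul_inv_one_add_X_pow_mul_one_add_X_pow {l c : ℕ} (h : l ≤ c) :
    (X * (1 + X)⁻¹ : K⟦X⟧) ^ l * (1 + X) ^ c = X ^ l * (1 + X) ^ (c - l) := by
  obtain ⟨d, rfl⟩ := Nat.exists_eq_add_of_le h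
  have hunit : (1 + X : K⟦X⟧)⁻¹ * (1 + X) = 1 := PowerSeries.inv_mul_cancel _ (by simp)
  rw [pow_add, ← mul_assoc, ← mul_pow, mul_assoc X, hunit, mul_one,
    Nat.add_sub_cancel_left]

end PowerSeries

theorem SimpleGraph.ncard_edgeSet {V : Type*} (G : SimpleGraph V) [Fintype G.edgeSet] :
    G.edgeSet.ncard = #G.edgeFinset :=
  Set.ncard_eq_toFinset_card' _

section EGF

variable (𝓕 : (k : ℕ) → Set (SimpleGraph (Fin k)))

theorem famCount_eq_zero_of_choose_two_lt {k l : ℕ} (h : k.choose 2 < l) :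
    famCount 𝓕 k l = 0 := by
  rw [famCount, Nat.card_eq_zero]
  refine .inl ⟨fun ⟨G, _, hG⟩ => ?_⟩
  have := G.card_edgeFinset_le_card_choose_two
  rw [Fintype.card_fin, ← G.ncard_edgeSet, hG] at this
  omega

theorem coeff_famEGFsub {k L : ℕ} (hL : k.choose 2 ≤ L) :
    coeff k (famEGFsub 𝓕) =
      ∑ l ∈ range (L + 1), C ((famCount 𝓕 k l : ℚ) / k.factorial) * (X * (1 + X)⁻¹) ^ l := by
  ext j
  simp only [famEGFsub, coeff_mk, map_sum, coeff_C_mul]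
  calc _ = ∑ l ∈ range (j + L + 1), (famCount 𝓕 k l : ℚ) / k.factorial *
        coeff j ((X * (1 + X)⁻¹ : ℚ⟦X⟧) ^ l) :=
        sum_subset (range_subset_range.2 (by omega)) fun l _ hl => by
          rw [coeff_X_mul_inv_one_add_X_pow_of_lt (by simpa using hl), mul_zero]
    _ = _ :=
        (sum_subset (range_subset_range.2 (by omega)) fun l _ hl => by
          rw [mem_range, not_lt] at hl
          rw [famCount_eq_zero_of_choose_two_lt 𝓕 (by omega), Nat.cast_zero, zero_div,
            zero_mul]).symm

theorem factorial_mul_coeff_coeff_famEGFsub_mul {k c : ℕ} (hc : k.choose 2 ≤ c) (m : ℕ) :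
    k.factorial * coeff m (coeff k (famEGFsub 𝓕) * (1 + X) ^ c) =
      ∑ l ∈ range (c + 1),
        (famCount 𝓕 k l : ℚ) * if l ≤ m then ((c - l).choose (m - l) : ℚ) else 0 := by
  rw [coeff_famEGFsub 𝓕 hc, sum_mul, map_sum, mul_sum]
  refine sum_congr rfl fun l hl => ?_
  rw [mul_assoc, X_mul_inv_one_add_X_pow_mul_one_add_X_pow (by simpa [Nat.lt_succ_iff] using hl),
    coeff_C_mul, coeff_X_pow_mul_one_add_X_pow]
  field_simp

theorem factorial_mul_coeff_coeff_famEGFsub_mul_exp {n c : ℕ} (hc : n.choose 2 ≤ c) (m : ℕ) :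
    n.factorial * coeff m (coeff n (famEGFsub 𝓕 * exp ℚ⟦X⟧ * C ((1 + X) ^ c))) =
      ∑ k ∈ range (n + 1), (n.choose k : ℚ) * ∑ l ∈ range (c + 1),
        (famCount 𝓕 k l : ℚ) * if l ≤ m then ((c - l).choose (m - l) : ℚ) else 0 := by
  rw [coeff_mul_C, coeff_mul n, Nat.sum_antidiagonal_eq_sum_range_succ_mk, sum_mul, map_sum,
    mul_sum]
  refine sum_congr rfl fun k hk => ?_
  have hkn : k ≤ n := Nat.lt_succ_iff.1 (mem_range.1 hk)
  have hkc : k.choose 2 ≤ c := (Nat.choose_le_choose 2 hkn).trans hc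
  have hexp : coeff (n - k) (exp ℚ⟦X⟧) = C (1 / (n - k).factorial : ℚ) := by
    rw [coeff_exp]; rfl
  rw [← factorial_mul_coeff_coeff_famEGFsub_mul 𝓕 hkc, hexp, mul_right_comm,
    coeff_mul_C, Nat.cast_choose ℚ hkn]
  field_simp

end EGF

theorem isGraph_iff_mem_powersetCard {n m : ℕ} {G : Finset (Sym2 (Fin n))} :
    IsGraph G m ↔ G ∈ (⊤ : SimpleGraph (Fin n)).edgeFinset.powersetCard m := by
  simp [IsGraph, mem_powersetCard, subset_iff, and_comm]

theorem card_edgeFinset_top_fin (n : ℕ) :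
    #(⊤ : SimpleGraph (Fin n)).edgeFinset = n.choose 2 := by
  simpa using SimpleGraph.card_edgeFinset_top_eq_card_choose_two (V := Fin n)

theorem card_filter_isGraph_superset {n : ℕ} {E : Finset (Sym2 (Fin n))}
    (hE : E ⊆ (⊤ : SimpleGraph (Fin n)).edgeFinset) (m : ℕ) :
    #{G | IsGraph G m ∧ E ⊆ G} = if #E ≤ m then (n.choose 2 - #E).choose (m - #E) else 0 := by
  split_ifs with hm
  · rw [← card_edgeFinset_top_fin, ← card_filter_powersetCard_subset _ _ m hE hm]
    congr 1
    ext G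
    simp [isGraph_iff_mem_powersetCard]
  · rw [card_eq_zero, filter_eq_empty_iff]
    rintro G - ⟨⟨hG, -⟩, hEG⟩
    exact hm (hG ▸ card_le_card hEG)

section Copies

variable {k n : ℕ} {H : SimpleGraph (Fin k)} {S : Finset (Fin n)} {E : Finset (Sym2 (Fin n))}

theorem IsCopyOf.card_eq (h : IsCopyOf H S E) : #S = k := by
  obtain ⟨φ, hφ, rfl, -⟩ := h
  rw [card_image_of_injective _ hφ, card_univ, Fintype.card_fin]

theorem IsCopyOf.subset_edgeFinset_top (h : IsCopyOf H S E) :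
    E ⊆ (⊤ : SimpleGraph (Fin n)).edgeFinset := by
  obtain ⟨φ, hφ, -, hE⟩ := h
  intro e he
  rw [← mem_coe, ← hE] at he
  obtain ⟨e, he, rfl⟩ := he
  simpa [Sym2.isDiag_map hφ] using H.not_isDiag_of_mem_edgeSet he

theorem isCopyOf_map_edgeFinset {ι : Fin k ↪ Fin n} (hι : univ.image ι = S)
    (H : SimpleGraph (Fin k)) : IsCopyOf H S (H.edgeFinset.map ι.sym2Map) :=
  ⟨ι, ι.injective, hι, by rw [coe_map, SimpleGraph.coe_edgeFinset]; rfl⟩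

theorem IsCopyOf.exists_iso_map_eq (h : IsCopyOf H S E) (ι : Fin k ↪ Fin n)
    (hι : univ.image ι = S) :
    ∃ H' : SimpleGraph (Fin k), Nonempty (H ≃g H') ∧ H'.edgeFinset.map ι.sym2Map = E := by
  obtain ⟨φ, hφ, hφS, hE⟩ := h
  have hrange : Set.range φ = Set.range ι := by
    simpa [← Set.image_univ] using
      congrArg ((↑) : Finset (Fin n) → Set (Fin n)) (hφS.trans hι.symm)
  let σ : Fin k ≃ Fin k := (Equiv.ofInjective φ hφ).trans
    ((Equiv.setCongr hrange).trans (Equiv.ofInjective ι ι.injective).symm)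
  have hσ : ∀ i, ι (σ i) = φ i := fun i => by
    simp [σ, Equiv.apply_ofInjective_symm]
  refine ⟨H.map σ.toEmbedding, ⟨SimpleGraph.Iso.map σ H⟩, ?_⟩
  rw [← coe_inj, coe_map, SimpleGraph.coe_edgeFinset, SimpleGraph.edgeSet_map σ.toEmbedding,
    Set.image_image, ← hE]
  refine Set.image_congr fun e _ => ?_
  induction e using Sym2.ind
  simp [hσ]

end Copies

theorem card_filter_exists_isCopyOf (𝓕 : (k : ℕ) → Set (SimpleGraph (Fin k)))
    (hiso : ∀ k, ∀ G G' : SimpleGraph (Fin k), Nonempty (G ≃g G') → (G ∈ 𝓕 k ↔ G' ∈ 𝓕 k))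
    {n : ℕ} (S : Finset (Fin n)) (l : ℕ) :
    #{E : Finset (Sym2 (Fin n)) |
        (∃ (k : ℕ) (H : SimpleGraph (Fin k)), H ∈ 𝓕 k ∧ IsCopyOf H S E) ∧ #E = l} =
      famCount 𝓕 #S l := by
  let ι : Fin #S ↪ Fin n := (S.orderEmbOfFin rfl).toEmbedding
  have hι : univ.image ι = S := S.image_orderEmbOfFin_univ rfl
  have hfilter : ({E : Finset (Sym2 (Fin n)) |
        (∃ (k : ℕ) (H : SimpleGraph (Fin k)), H ∈ 𝓕 k ∧ IsCopyOf H S E) ∧ #E = l} : Finset _) =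
      ({H : SimpleGraph (Fin #S) | H ∈ 𝓕 #S ∧ H.edgeSet.ncard = l} : Finset _).image
        fun H => H.edgeFinset.map ι.sym2Map := by
    ext E
    simp only [mem_filter, mem_univ, true_and, mem_image, SimpleGraph.ncard_edgeSet]
    constructor
    · rintro ⟨⟨k, H, hH, hcopy⟩, rfl⟩
      obtain rfl := hcopy.card_eq
      obtain ⟨H', ⟨e⟩, rfl⟩ := hcopy.exists_iso_map_eq ι hι
      exact ⟨H', ⟨(hiso _ H H' ⟨e⟩).1 hH, (card_map _).symm⟩, rfl⟩
    · rintro ⟨H, ⟨hH, rfl⟩, rfl⟩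
      exact ⟨⟨#S, H, hH, isCopyOf_map_edgeFinset hι H⟩, card_map _⟩
  rw [hfilter, card_image_of_injective _ fun H₁ H₂ h =>
      SimpleGraph.edgeFinset_inj.1 (map_injective _ h),
    famCount, Nat.card_eq_fintype_card, Fintype.card_subtype]

theorem card_isGraph_with_distinguished (𝓕 : (k : ℕ) → Set (SimpleGraph (Fin k)))
    (hiso : ∀ k, ∀ G G' : SimpleGraph (Fin k), Nonempty (G ≃g G') → (G ∈ 𝓕 k ↔ G' ∈ 𝓕 k))
    (n m : ℕ) :
    Nat.card {p : Finset (Sym2 (Fin n)) × Finset (Fin n) × Finset (Sym2 (Fin n)) //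
        IsGraph p.1 m ∧ p.2.2 ⊆ p.1 ∧
        ∃ (k : ℕ) (H : SimpleGraph (Fin k)), H ∈ 𝓕 k ∧ IsCopyOf H p.2.1 p.2.2} =
      ∑ k ∈ range (n + 1), n.choose k * ∑ l ∈ range (n.choose 2 + 1),
        famCount 𝓕 k l * if l ≤ m then (n.choose 2 - l).choose (m - l) else 0 := by
  set Fam : Finset (Fin n) → Finset (Sym2 (Fin n)) → Prop :=
    fun S E => ∃ (k : ℕ) (H : SimpleGraph (Fin k)), H ∈ 𝓕 k ∧ IsCopyOf H S E
  set supersets : ℕ → ℕ := fun l => if l ≤ m then (n.choose 2 - l).choose (m - l) else 0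
  have hfiber : ∀ S E, ∑ G : Finset (Sym2 (Fin n)),
      (if IsGraph G m ∧ E ⊆ G ∧ Fam S E then 1 else 0) = if Fam S E then supersets #E else 0 := by
    intro S E
    split_ifs with hSE
    · obtain ⟨k, H, -, hcopy⟩ := id hSE
      simp only [hSE, and_true, ← card_filter]
      exact card_filter_isGraph_superset hcopy.subset_edgeFinset_top m
    · simp [hSE]
  have hgroup : ∀ S, ∑ E : Finset (Sym2 (Fin n)), (if Fam S E then supersets #E else 0) =
      ∑ l ∈ range (n.choose 2 + 1), famCount 𝓕 #S l * supersets l := by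
    intro S
    rw [← sum_filter, ← sum_fiberwise_of_maps_to' (t := range (n.choose 2 + 1)) (g := card)]
    · refine sum_congr rfl fun l _ => ?_
      rw [sum_const, smul_eq_mul, filter_filter, card_filter_exists_isCopyOf 𝓕 hiso]
    · rintro E hE
      obtain ⟨k, H, -, hcopy⟩ := (mem_filter.1 hE).2
      rw [mem_range, Nat.lt_succ_iff, ← card_edgeFinset_top_fin]
      exact card_le_card hcopy.subset_edgeFinset_top
  calc _ = ∑ S : Finset (Fin n), ∑ E : Finset (Sym2 (Fin n)),
        ∑ G : Finset (Sym2 (Fin n)), if IsGraph G m ∧ E ⊆ G ∧ Fam S E then 1 else 0 := by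
        rw [Nat.card_eq_fintype_card, Fintype.card_subtype, card_filter, Fintype.sum_prod_type,
          sum_comm, Fintype.sum_prod_type]
    _ = ∑ S : Finset (Fin n), ∑ l ∈ range (n.choose 2 + 1), famCount 𝓕 #S l * supersets l := by
        simp only [hfiber, hgroup]
    _ = _ := by
        rw [← powerset_univ, sum_powerset_apply_card
          fun k => ∑ l ∈ range (n.choose 2 + 1), famCount 𝓕 k l * supersets l,
          card_univ, Fintype.card_fin]
        rfl

/-- for any graph family `𝓕` closed under isomorphism, the number of
`(n,m)`-graphs with one distinguished `𝓕`-subgraph equals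
`n!·[z^n w^m] F(z, w/(1+w)) e^z (1+w)^{C(n,2)}`, where
`F(z,w) = ∑ 𝓕_{k,ℓ} w^ℓ z^k/k!`. -/
theorem stmt_18 (𝓕 : (k : ℕ) → Set (SimpleGraph (Fin k)))
    (hiso : ∀ k, ∀ G G' : SimpleGraph (Fin k), Nonempty (G ≃g G') →
      (G ∈ 𝓕 k ↔ G' ∈ 𝓕 k))
    (n m : ℕ) :
    (Nat.card {p : Finset (Sym2 (Fin n)) × Finset (Fin n) × Finset (Sym2 (Fin n)) //
        IsGraph p.1 m ∧ p.2.2 ⊆ p.1 ∧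
        ∃ (k : ℕ) (H : SimpleGraph (Fin k)), H ∈ 𝓕 k ∧ IsCopyOf H p.2.1 p.2.2} : ℚ)
      = (Nat.factorial n : ℚ) *
          PowerSeries.coeff (R := ℚ) m (PowerSeries.coeff (R := PowerSeries ℚ) n
            (famEGFsub 𝓕 * PowerSeries.exp (PowerSeries ℚ) *
              PowerSeries.C (R := PowerSeries ℚ) ((1 + X) ^ Nat.choose n 2))) := by
  rw [factorial_mul_coeff_coeff_famEGFsub_mul_exp 𝓕 le_rfl]
  exact_mod_cast card_isGraph_with_distinguished 𝓕 hiso n m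
end
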